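/- (Lemma 2, fully dense transition matrices; content established by the paper's proof.) Assume 0 < λ < 1 and that p_{ij}(a) > 0 for all i, j ∈ S and all a ∈ A(i). Then T is strictly monotone in the following strong sense: for all u, v ∈ ℝ^S with u ≤ v and u ≠ v, one has Tu < Tv strictly in every component. In particular, if v ∈ V and Tv ≠ v, then T(Tv) < Tv strictly in every component, so Tv lies in the interior of V. -/

import Mathlib

/-! With all transition probabilities positive, raising `v` strictly at a single state raises
every expected continuation value `∑ j, p i a j * v j` strictly, so every action's value
increases strictly and hence so does their maximum. The second part is the first one applied
to `Tv ≤ v`, `Tv ≠ v`. -/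

noncomputable def Tval {S : Type*} [Fintype S] {A : S → Type*}
    [∀ i, Fintype (A i)] [∀ i, Nonempty (A i)]
    (r : ∀ i, A i → ℝ) (p : ∀ i, A i → S → ℝ) (lam : ℝ) (v : S → ℝ) (i : S) : ℝ :=
  Finset.univ.sup' Finset.univ_nonempty fun a : A i =>
    r i a + lam * ∑ j, p i a j * v j

theorem Finset.sum_mul_lt_sum_mul_of_pos {ι R : Type*} [Fintype ι] [Semiring R] [PartialOrder R]
    [IsStrictOrderedRing R] {w u v : ι → R} (hw : ∀ j, 0 < w j) (huv : u < v) :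
    ∑ j, w j * u j < ∑ j, w j * v j := by
  obtain ⟨hle, j₀, hj₀⟩ := Pi.lt_def.mp huv
  exact Finset.sum_lt_sum (fun j _ => mul_le_mul_of_nonneg_left (hle j) (hw j).le)
    ⟨j₀, Finset.mem_univ j₀, mul_lt_mul_of_pos_left hj₀ (hw j₀)⟩

theorem Finset.sup'_lt_sup'_of_forall_lt {α β : Type*} [LinearOrder β] {s : Finset α}
    (hs : s.Nonempty) {f g : α → β} (hfg : ∀ a ∈ s, f a < g a) : s.sup' hs f < s.sup' hs g :=
  (Finset.sup'_lt_iff hs).mpr fun a ha => (hfg a ha).trans_le (Finset.le_sup' g ha)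

theorem Tval_lt_Tval {S : Type*} [Fintype S] {A : S → Type*}
    [∀ i, Fintype (A i)] [∀ i, Nonempty (A i)]
    (r : ∀ i, A i → ℝ) {p : ∀ i, A i → S → ℝ} {lam : ℝ} (hlam : 0 < lam)
    (hp : ∀ i (a : A i) (j : S), 0 < p i a j) {u v : S → ℝ} (huv : u < v) (i : S) :
    Tval r p lam u i < Tval r p lam v i :=
  Finset.sup'_lt_sup'_of_forall_lt _ fun a _ => add_lt_add_right
    (mul_lt_mul_of_pos_left (Finset.sum_mul_lt_sum_mul_of_pos (hp i a) huv) hlam) _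

theorem fully_dense_strict_general {S : Type*} [Fintype S] {A : S → Type*}
    [∀ i, Fintype (A i)] [∀ i, Nonempty (A i)]
    (r : ∀ i, A i → ℝ) (p : ∀ i, A i → S → ℝ) (lam : ℝ)
    (hlam0 : 0 < lam)
    (hppos : ∀ i (a : A i) (j : S), 0 < p i a j) :
    (∀ u v : S → ℝ, (∀ j, u j ≤ v j) → u ≠ v →
      ∀ i, Tval r p lam u i < Tval r p lam v i) ∧
    (∀ v : S → ℝ, (∀ i, Tval r p lam v i ≤ v i) → Tval r p lam v ≠ v →
      ∀ i, Tval r p lam (Tval r p lam v) i < Tval r p lam v i) := by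
  have strict_mono : ∀ u v : S → ℝ, (∀ j, u j ≤ v j) → u ≠ v →
      ∀ i, Tval r p lam u i < Tval r p lam v i := fun u v hle hne =>
    Tval_lt_Tval r hlam0 hppos (lt_of_le_of_ne hle hne)
  exact ⟨strict_mono, fun v hTv hne => strict_mono _ v hTv hne⟩

theorem fully_dense_strict {S : Type*} [Fintype S] [Nonempty S] {A : S → Type*}
    [∀ i, Fintype (A i)] [∀ i, Nonempty (A i)]
    (r : ∀ i, A i → ℝ) (p : ∀ i, A i → S → ℝ) (lam : ℝ)
    (hp : ∀ i (a : A i) (j : S), 0 ≤ p i a j)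
    (hp1 : ∀ i (a : A i), ∑ j, p i a j = 1)
    (hlam0 : 0 < lam) (hlam1 : lam < 1)
    (hppos : ∀ i (a : A i) (j : S), 0 < p i a j) :
    (∀ u v : S → ℝ, (∀ j, u j ≤ v j) → u ≠ v →
      ∀ i, Tval r p lam u i < Tval r p lam v i) ∧
    (∀ v : S → ℝ, (∀ i, Tval r p lam v i ≤ v i) → Tval r p lam v ≠ v →
      ∀ i, Tval r p lam (Tval r p lam v) i < Tval r p lam v i) :=
  fully_dense_strict_general r p lam hlam0 hppos
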